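/- arXiv:2302.06122 — 2 statements merged into one kernel-verified Lean document; each statement's English description precedes it below -/
import Mathlib

section
/- Let 0 < γ < 1/2 and let x_0, x_1, …, x_N be nonnegative real numbers satisfying x_k ≤ γ(x_{k-1} + x_{k+1}) for every 1 ≤ k ≤ N−1. Set ξ := (1 + √(1 − 4γ²))/(2γ). Then for every 0 ≤ k ≤ N one has x_k ≤ x_0·ξ^{−k} + x_N·ξ^{−(N−k)}. -/
/-!
`a = ξ⁻¹` is the smaller root of `γ a² - a + γ = 0`, so the comparison sequence
`y k = x 0 * a ^ k + x N * a ^ (N - k)` satisfies the recursion with equality and dominates `x`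
at both ends. The difference `x - y` is then a subsolution with nonpositive boundary values, and a
positive interior maximum `M` would give `M ≤ 2γM < M`.
-/

theorem nonpos_of_le_mul_neighbors {γ : ℝ} (hγ0 : 0 ≤ γ) (hγ : γ < 1 / 2) {N : ℕ} {z : ℕ → ℝ}
    (h0 : z 0 ≤ 0) (hN : z N ≤ 0)
    (hrec : ∀ k, 1 ≤ k → k + 1 ≤ N → z k ≤ γ * (z (k - 1) + z (k + 1))) :
    ∀ k ≤ N, z k ≤ 0 := by
  obtain ⟨j, hjN, hmax⟩ := (Finset.range (N + 1)).exists_max_image z ⟨0, by simp⟩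
  simp only [Finset.mem_range, Nat.lt_succ_iff] at hjN hmax
  suffices z j ≤ 0 from fun k hk => (hmax k hk).trans this
  rcases Nat.eq_zero_or_pos j with rfl | hj1
  · exact h0
  rcases hjN.eq_or_lt with rfl | hjN
  · exact hN
  have hstep := hrec j hj1 hjN
  have := hmax (j - 1) (by omega)
  have := hmax (j + 1) hjN
  nlinarith

noncomputable def decayRatio (γ : ℝ) : ℝ := ((1 + √(1 - 4 * γ ^ 2)) / (2 * γ))⁻¹

theorem decayRatio_nonneg {γ : ℝ} (hγ : 0 ≤ γ) : 0 ≤ decayRatio γ := by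
  unfold decayRatio; positivity

theorem mul_one_add_decayRatio_sq {γ : ℝ} (hγ : 4 * γ ^ 2 ≤ 1) :
    γ * (1 + decayRatio γ ^ 2) = decayRatio γ := by
  rw [decayRatio, inv_div]
  have hs : √(1 - 4 * γ ^ 2) ^ 2 = 1 - 4 * γ ^ 2 := Real.sq_sqrt (by linarith)
  have : 0 < 1 + √(1 - 4 * γ ^ 2) := by positivity
  generalize √(1 - 4 * γ ^ 2) = s at *
  field_simp
  linear_combination γ * hs

theorem pow_succ_eq_mul_pow_add_pow {γ a : ℝ} (ha : γ * (1 + a ^ 2) = a) (j : ℕ) :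
    a ^ (j + 1) = γ * (a ^ j + a ^ (j + 2)) := by
  linear_combination (-a ^ j) * ha

theorem comparison_eq_mul_neighbors {γ a : ℝ} (ha : γ * (1 + a ^ 2) = a) (A B : ℝ) {N k : ℕ}
    (hk : 1 ≤ k) (hkN : k + 1 ≤ N) :
    A * a ^ k + B * a ^ (N - k) =
      γ * ((A * a ^ (k - 1) + B * a ^ (N - (k - 1))) + (A * a ^ (k + 1) + B * a ^ (N - (k + 1)))) := by
  obtain ⟨m, rfl⟩ : ∃ m, k = m + 1 := ⟨k - 1, by omega⟩
  obtain ⟨j, rfl⟩ : ∃ j, N = m + 2 + j := ⟨N - (m + 2), by omega⟩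
  rw [show m + 2 + j - (m + 1) = j + 1 by omega, show m + 1 - 1 = m by omega,
    show m + 2 + j - m = j + 2 by omega, show m + 2 + j - (m + 1 + 1) = j by omega,
    pow_succ_eq_mul_pow_add_pow ha m, pow_succ_eq_mul_pow_add_pow ha j]
  ring

/-- **Three-interval lemma** (Mundet–Tian, Lemma 9.4). If `0 < γ < 1/2` and the
nonnegative numbers `x 0, …, x N` satisfy `x k ≤ γ (x (k-1) + x (k+1))` for
`1 ≤ k ≤ N - 1`, then with `ξ = (1 + √(1 - 4γ²))/(2γ)` one has
`x k ≤ x 0 * ξ⁻ᵏ + x N * ξ⁻⁽ᴺ⁻ᵏ⁾` for all `0 ≤ k ≤ N`. -/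
theorem three_interval_lemma (γ : ℝ) (hγ0 : 0 < γ) (hγ : γ < 1 / 2)
    (N : ℕ) (x : ℕ → ℝ) (hnn : ∀ k, k ≤ N → 0 ≤ x k)
    (hrec : ∀ k, 1 ≤ k → k + 1 ≤ N → x k ≤ γ * (x (k - 1) + x (k + 1))) :
    ∀ k, k ≤ N →
      x k ≤ x 0 * ((1 + Real.sqrt (1 - 4 * γ ^ 2)) / (2 * γ))⁻¹ ^ k +
        x N * ((1 + Real.sqrt (1 - 4 * γ ^ 2)) / (2 * γ))⁻¹ ^ (N - k) := by
  set a := decayRatio γ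
  have ha0 : 0 ≤ a := decayRatio_nonneg hγ0.le
  have ha : γ * (1 + a ^ 2) = a := mul_one_add_decayRatio_sq (by nlinarith)
  have haN : 0 ≤ a ^ N := pow_nonneg ha0 N
  have hx0 := hnn 0 N.zero_le
  have hxN := hnn N le_rfl
  have hz := nonpos_of_le_mul_neighbors (N := N)
    (z := fun k => x k - (x 0 * a ^ k + x N * a ^ (N - k))) hγ0.le hγ
    (by simp only [pow_zero, Nat.sub_zero]; nlinarith)
    (by simp only [pow_zero, Nat.sub_self]; nlinarith)
    (fun k hk hkN => by
      rw [comparison_eq_mul_neighbors ha (x 0) (x N) hk hkN]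
      linarith [hrec k hk hkN])
  exact fun k hk => sub_nonpos.mp (hz k hk)
end

section
/- Let 0 < γ < 1/2 and let (x_k)_{k≥0} be a bounded sequence of nonnegative real numbers satisfying x_k ≤ γ(x_{k-1} + x_{k+1}) for all k ≥ 1. Write γ = 1/(e^c + e^{−c}) for the unique c > 0. Then x_k ≤ x_0·e^{−ck} for all k ≥ 0. -/
lemma wrec_aux (γ c : ℝ) (hγc : γ = 1 / (Real.exp c + Real.exp (-c)))
    (a b t : ℝ) :
    γ * ((a * Real.exp (-(c*t)) + b * Real.exp (c*t))
        + (a * Real.exp (-(c*(t+2))) + b * Real.exp (c*(t+2))))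
      = a * Real.exp (-(c*(t+1))) + b * Real.exp (c*(t+1)) := by
  have hE : (0:ℝ) < Real.exp c := Real.exp_pos _
  have hB : (0:ℝ) < Real.exp (c*t) := Real.exp_pos _
  rw [show -(c*(t+1)) = -(c*t) + -c by ring, show c*(t+1) = c*t + c by ring,
    show -(c*(t+2)) = -(c*t) + -c + -c by ring, show c*(t+2) = c*t + c + c by ring]
  simp only [Real.exp_add, Real.exp_neg c, Real.exp_neg (c*t)]
  subst hγc
  rw [Real.exp_neg c]
  field_simp
  ring

/-- Infinite-sequence exponential decay version of the three-interval lemma: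
if `0 < γ < 1/2`, `(x k)` is a bounded sequence of nonnegative reals with
`x k ≤ γ (x (k-1) + x (k+1))` for all `k ≥ 1`, and `c > 0` is the unique
positive number with `γ = 1/(e^c + e^{-c})`, then `x k ≤ x 0 * e^{-c k}`. -/
theorem three_interval_exponential_decay (γ c : ℝ) (hγ0 : 0 < γ) (hγ : γ < 1 / 2)
    (hc : 0 < c) (hγc : γ = 1 / (Real.exp c + Real.exp (-c)))
    (x : ℕ → ℝ) (hnn : ∀ k, 0 ≤ x k) (hbdd : ∃ C, ∀ k, x k ≤ C)
    (hrec : ∀ k, 1 ≤ k → x k ≤ γ * (x (k - 1) + x (k + 1))) :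
    ∀ k : ℕ, x k ≤ x 0 * Real.exp (-(c * k)) := by
  intro k
  -- it suffices to show `x k ≤ x 0 * exp(-(c k)) + ε` for every `ε > 0`
  suffices h : ∀ ε : ℝ, 0 < ε → x k ≤ x 0 * Real.exp (-(c * k)) + ε by
    by_contra hlt
    push_neg at hlt
    have := h ((x k - x 0 * Real.exp (-(c * k))) / 2) (by linarith)
    linarith
  intro ε hε
  obtain ⟨C, hC⟩ := hbdd
  set ε' : ℝ := ε / Real.exp (c * k) with hε'def
  have hε'pos : 0 < ε' := div_pos hε (Real.exp_pos _)
  -- the comparison function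
  set w : ℕ → ℝ := fun j => x 0 * Real.exp (-(c * j)) + ε' * Real.exp (c * j) with hw
  -- main claim by a maximum-principle argument
  have hmain : ∀ j : ℕ, x j ≤ w j := by
    by_contra hbad
    push_neg at hbad
    obtain ⟨j₀, hj₀⟩ := hbad
    -- find N beyond which x j < w j always
    obtain ⟨N, hN⟩ := exists_nat_gt (C / ε' / c)
    have hfar : ∀ j : ℕ, N ≤ j → x j < w j := by
      intro j hj
      have h1 : C / ε' < c * j := by
        have : C / ε' / c < (j : ℝ) := lt_of_lt_of_le hN (by exact_mod_cast hj)
        calc C / ε' = (C / ε' / c) * c := by rw [div_mul_cancel₀ _ hc.ne']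
        _ < (j : ℝ) * c := by exact mul_lt_mul_of_pos_right this hc
        _ = c * j := by ring
      have h2 : c * j < Real.exp (c * j) := by
        have := Real.add_one_le_exp (c * j)
        linarith
      have h3 : C < ε' * Real.exp (c * j) := by
        have : C / ε' < Real.exp (c * j) := lt_trans h1 h2
        calc C = (C / ε') * ε' := by rw [div_mul_cancel₀ _ hε'pos.ne']
        _ < Real.exp (c * j) * ε' := mul_lt_mul_of_pos_right this hε'pos
        _ = ε' * Real.exp (c * j) := by ring
      have hx0exp : 0 ≤ x 0 * Real.exp (-(c * j)) :=
        mul_nonneg (hnn 0) (Real.exp_pos _).le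
      have := hC j
      simp only [hw]
      linarith
    -- j₀ must be below N
    have hj₀N : j₀ < N + 1 := by
      by_contra hge
      push_neg at hge
      exact absurd hj₀ (not_lt.mpr (hfar j₀ (by omega)).le)
    -- take the maximizer of x - w on [0, N]
    obtain ⟨m, hm_mem, hm_max⟩ := Finset.exists_max_image (Finset.range (N + 1))
      (fun j => x j - w j) ⟨0, Finset.mem_range.mpr (by omega)⟩
    have hmpos : 0 < x m - w m := by
      have := hm_max j₀ (Finset.mem_range.mpr hj₀N)
      linarith
    have hglob : ∀ j : ℕ, x j - w j ≤ x m - w m := by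
      intro j
      by_cases hj : j < N + 1
      · exact hm_max j (Finset.mem_range.mpr hj)
      · have := hfar j (by omega)
        linarith
    -- m ≥ 1 since x 0 - w 0 = -ε' < 0
    have hw0 : w 0 = x 0 + ε' := by
      simp [hw]
    have hm1 : 1 ≤ m := by
      rcases Nat.eq_zero_or_pos m with h0 | h1
      · rw [h0] at hmpos; rw [hw0] at hmpos; linarith
      · exact h1
    obtain ⟨j, rfl⟩ : ∃ j, m = j + 1 := ⟨m - 1, by omega⟩
    -- the recurrence for w
    have hwrec : w (j + 1) = γ * (w j + w (j + 2)) := by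
      have := wrec_aux γ c hγc (x 0) ε' (j : ℝ)
      simp only [hw]
      push_cast
      linarith [this]
    have hxrec := hrec (j + 1) (by omega)
    simp only [Nat.add_sub_cancel] at hxrec
    have hd1 : x j - w j ≤ x (j + 1) - w (j + 1) := hglob j
    have hd2 : x (j + 2) - w (j + 2) ≤ x (j + 1) - w (j + 1) := hglob (j + 2)
    have : x (j + 1) - w (j + 1) ≤ γ * ((x j - w j) + (x (j + 2) - w (j + 2))) := by
      have : x (j + 1 + 1) = x (j + 2) := by norm_num
      rw [this] at hxrec
      nlinarith [hwrec]
    nlinarith [hmpos, hd1, hd2, this, hγ0.le]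
  -- conclude
  have := hmain k
  simp only [hw] at this
  rw [hε'def, div_mul_cancel₀ _ (Real.exp_pos (c * k)).ne'] at this
  exact this
end
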